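/- Let W = L ⊕ F with ω ∈ Λ^{n+1} W*, L maximal isotropic decomposable, F n-isotropic, and suppose dim(L / ker ω) = ℓ(ω) (the length of ω). If B_F = {e_{i}} is a basis of F realizing this minimum, then the n-forms ê_î := i_{e_{i₁} ∧ ... ∧ e_{iₙ}} ω, for î ranging over the multi-indices with ê_î ≠ 0, form a basis of ω^♭(L) ≅ (L/ker ω)*, and ω = Σ_î ê_î ∧ e^{i₁} ∧ ... ∧ e^{iₙ} where {e^i} is the dual basis of B_F inside L^⊥. -/
import Mathlib


open Module Function

variable {K : Type*} [Field K] {W : Type*} [AddCommGroup W] [Module K W]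

/-- The wedge product `α 0 ∧ ⋯ ∧ α (n-1)` of `n` linear forms, as an alternating `n`-form. -/
noncomputable def detForm (n : ℕ) (α : Fin n → Module.Dual K W) : W [⋀^Fin n]→ₗ[K] K :=
  (Matrix.detRowAlternating (R := K) (n := Fin n)).compLinearMap (LinearMap.pi α)

/-- The kernel of an alternating form under interior contraction:
`v ∈ kerForm β ↔ i_v β = 0`. -/
def kerForm {n : ℕ} (β : W [⋀^Fin n]→ₗ[K] K) : Submodule K W where
  carrier := {v | ∀ w : Fin n → W, (∃ i, w i = v) → β w = 0}
  zero_mem' := by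
    rintro w ⟨i, hi⟩
    have h : w = Function.update w i (0 : W) := by rw [← hi, Function.update_eq_self]
    rw [h]
    simp
  add_mem' := by
    rintro a b ha hb w ⟨i, hi⟩
    have h : w = Function.update w i (a + b) := by rw [← hi, Function.update_eq_self]
    rw [h, β.map_update_add]
    rw [ha _ ⟨i, by simp⟩, hb _ ⟨i, by simp⟩, add_zero]
  smul_mem' := by
    rintro c a ha w ⟨i, hi⟩
    have h : w = Function.update w i (c • a) := by rw [← hi, Function.update_eq_self]
    rw [h, β.map_update_smul, ha _ ⟨i, by simp⟩, smul_zero]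

/-- The support of an alternating `n`-form `β`: the smallest subspace `S ⊆ W*` such that
`β ∈ Λⁿ S` (equivalently, `β` is a linear combination of wedges of elements of `S`). -/
noncomputable def supp {n : ℕ} (β : W [⋀^Fin n]→ₗ[K] K) : Submodule K (Module.Dual K W) :=
  sInf {S | β ∈ Submodule.span K
    {γ | ∃ α : Fin n → Module.Dual K W, (∀ i, α i ∈ S) ∧ γ = detForm n α}}

/-- `L` is `k`-isotropic w.r.t. `ω`: every contraction of `ω` with `k+1` vectors of `L`
vanishes. -/
def kIsotropic {n : ℕ} (ω : W [⋀^Fin n]→ₗ[K] K) (k : ℕ) (L : Submodule K W) : Prop :=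
  ∀ v : Fin n → W, (∀ i : Fin n, (i : ℕ) ≤ k → v i ∈ L) → ω v = 0

/-- `L` is maximal (1-)isotropic w.r.t. `ω`. -/
def MaximalIsotropic {n : ℕ} (ω : W [⋀^Fin n]→ₗ[K] K) (L : Submodule K W) : Prop :=
  kIsotropic ω 1 L ∧ ∀ L' : Submodule K W, kIsotropic ω 1 L' → L ≤ L' → L' = L

/-- `v` is a decomposable vector w.r.t. the `(n+1)`-form `ω`, i.e. `i_v ω` is a
decomposable `n`-form. -/
def DecompVec {n : ℕ} (ω : W [⋀^Fin (n + 1)]→ₗ[K] K) (v : W) : Prop :=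
  ∃ α : Fin n → Module.Dual K W, ω.curryLeft v = detForm n α

/-- `L` is decomposable w.r.t. `ω`: it has a basis of decomposable vectors. -/
def DecompSub {n : ℕ} (ω : W [⋀^Fin (n + 1)]→ₗ[K] K) (L : Submodule K W) : Prop :=
  ∃ (m : ℕ) (b : Fin m → W), (∀ i, b i ∈ L) ∧ LinearIndependent K b ∧
    Submodule.span K (Set.range b) = L ∧ ∀ i, DecompVec ω (b i)

/-- The length of the `(n+1)`-form `ω` w.r.t. a basis `b`. -/
noncomputable def lenB {n d : ℕ} (ω : W [⋀^Fin (n + 1)]→ₗ[K] K) (b : Basis (Fin d) K W) : ℕ :=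
  Nat.card {s : Fin (n + 1) → Fin d // StrictMono s ∧ ω (fun i => b (s i)) ≠ 0}

/-- The length of `ω`: the minimum of `lenB ω b` over all bases of `W`. -/
noncomputable def lengthOf [FiniteDimensional K W] {n : ℕ}
    (ω : W [⋀^Fin (n + 1)]→ₗ[K] K) : ℕ :=
  sInf {m | ∃ b : Basis (Fin (finrank K W)) K W, lenB ω b = m}

/-- The `1`-form `v ↦ ω (v, c₁, …, cₙ)`, i.e. `± i_{c₁ ∧ ⋯ ∧ cₙ} ω`. -/
noncomputable def consContr {n : ℕ} (ω : W [⋀^Fin (n + 1)]→ₗ[K] K) (c : Fin n → W) :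
    Module.Dual K W where
  toFun v := ω.curryLeft v c
  map_add' x y := by simp only [map_add]; rfl
  map_smul' r x := by simp only [map_smul]; rfl

section Aux

lemma detForm_apply' {n : ℕ} (α : Fin n → Module.Dual K W) (w : Fin n → W) :
    detForm n α w = Matrix.det (Matrix.of fun i j => α j (w i)) := rfl

lemma consContr_apply' {n : ℕ} (ω : W [⋀^Fin (n + 1)]→ₗ[K] K) (c : Fin n → W) (v : W) :
    consContr ω c v = ω (Fin.cons v c) := rfl

lemma alt_sum_apply {n : ℕ} {α : Type*} [Fintype α] (f : α → (W [⋀^Fin n]→ₗ[K] K))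
    (w : Fin n → W) :
    (∑ a, f a) w = ∑ a, f a w :=
  map_sum (AddMonoidHom.mk' (fun (g : W [⋀^Fin n]→ₗ[K] K) => g w) (fun _ _ => rfl)) f
    Finset.univ

lemma det_eq_zero_of_two_rows {m : ℕ} (M : Matrix (Fin (m+1)) (Fin (m+1)) K) (i j : Fin (m+1))
    (hij : i ≠ j) (hi : ∀ c, c ≠ 0 → M i c = 0) (hj : ∀ c, c ≠ 0 → M j c = 0) :
    M.det = 0 := by
  by_cases h : M i 0 = 0
  · exact Matrix.det_eq_zero_of_row_eq_zero i fun c => by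
      rcases eq_or_ne c 0 with rfl | hc
      · exact h
      · exact hi c hc
  · have hrow : M j = (M j 0 / M i 0) • M i := by
      funext c
      rcases eq_or_ne c 0 with rfl | hc
      · simp [div_mul_cancel₀ _ h]
      · simp [hi c hc, hj c hc]
    have hM : M = M.updateRow j ((M j 0 / M i 0) • M i) := by
      rw [← hrow, Matrix.updateRow_eq_self]
    rw [hM, Matrix.det_updateRow_smul]
    have heq : (M.updateRow j (M i)) i = (M.updateRow j (M i)) j := by
      rw [Matrix.updateRow_ne hij, Matrix.updateRow_self]
    rw [Matrix.det_zero_of_row_eq hij heq, mul_zero]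

lemma alt_zero_of_two_mem {n : ℕ} (β : W [⋀^Fin (n+1)]→ₗ[K] K) (L : Submodule K W)
    (h2 : ∀ w : Fin (n+1) → W, (0 : Fin (n+1)) ≠ 1 → w 0 ∈ L → w 1 ∈ L → β w = 0)
    (w : Fin (n+1) → W) (i j : Fin (n+1)) (hij : i ≠ j) (hi : w i ∈ L) (hj : w j ∈ L) :
    β w = 0 := by
  rcases n with _ | m
  · exact absurd (Subsingleton.elim (α := Fin 1) i j) hij
  · set c := Equiv.swap (0 : Fin (m+2)) i with hc
    have hcj : c j ≠ 0 := by
      intro h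
      have : c j = c i := by rw [h, hc, Equiv.swap_apply_right]
      exact hij (c.injective this).symm
    set σ : Equiv.Perm (Fin (m+2)) := (Equiv.swap 1 (c j)).trans c with hσ
    have hσ0 : σ 0 = i := by
      rw [hσ]
      simp only [Equiv.trans_apply]
      rw [Equiv.swap_apply_of_ne_of_ne (by exact zero_ne_one) (Ne.symm hcj), hc,
        Equiv.swap_apply_left]
    have hσ1 : σ 1 = j := by
      rw [hσ]
      simp only [Equiv.trans_apply]
      rw [Equiv.swap_apply_left, hc]
      exact (Equiv.swap 0 i).apply_eq_iff_eq_symm_apply.mpr (by simp [hc])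
    rw [β.map_congr_perm (v := w) σ,
      h2 (w ∘ σ) (by exact zero_ne_one) (by simpa [hσ0] using hi) (by simpa [hσ1] using hj),
      smul_zero]

lemma cons_comp_decompose {n : ℕ} (x : W) (c : Fin n → W) (σ : Equiv.Perm (Fin n)) :
    Fin.cons x c ∘ (Equiv.Perm.decomposeFin.symm (0, σ)) = Fin.cons x (c ∘ σ) := by
  funext i
  refine Fin.cases ?_ (fun k => ?_) i
  · simp
  · simp [Equiv.Perm.decomposeFin_symm_apply_succ]

lemma alt_cons_perm {n : ℕ} (β : W [⋀^Fin (n+1)]→ₗ[K] K) (x : W) (c : Fin n → W)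
    (σ : Equiv.Perm (Fin n)) :
    β (Fin.cons x (c ∘ σ)) = Equiv.Perm.sign σ • β (Fin.cons x c) := by
  rw [← cons_comp_decompose, AlternatingMap.map_perm]
  congr 1
  rw [Equiv.Perm.decomposeFin.symm_sign, if_pos rfl, one_mul]

lemma ncard_range_fin {n d : ℕ} (f : Fin n → Fin d) (hf : Function.Injective f) :
    (Set.range f).ncard = n := by
  classical
  rw [Set.ncard_eq_toFinset_card', Set.toFinset_range,
    Finset.card_image_of_injective _ hf, Finset.card_univ, Fintype.card_fin]

lemma det_delta {n d : ℕ} {s t : Fin n → Fin d} (hs : StrictMono s) (ht : StrictMono t) :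
    Matrix.det (Matrix.of fun k j : Fin n => if s j = t k then (1:K) else 0) =
      if s = t then 1 else 0 := by
  rcases eq_or_ne s t with rfl | hst
  · rw [if_pos rfl]
    have h1 : (Matrix.of fun k j : Fin n => if s j = s k then (1:K) else 0) = 1 := by
      ext k j
      simp [Matrix.one_apply, hs.injective.eq_iff, eq_comm]
    rw [h1, Matrix.det_one]
  · rw [if_neg hst]
    by_cases hsub : Set.range t ⊆ Set.range s
    · exfalso
      haveI : WellFoundedLT (Fin n) := inferInstance
      exact hst ((hs.range_inj ht).mp (Set.eq_of_subset_of_ncard_le hsub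
        (by rw [ncard_range_fin s hs.injective, ncard_range_fin t ht.injective])
        (Set.finite_range s)).symm)
    · obtain ⟨x, ⟨k, rfl⟩, hk⟩ := Set.not_subset.mp hsub
      refine Matrix.det_eq_zero_of_row_eq_zero k fun j => ?_
      simp only [Matrix.of_apply]
      exact if_neg fun h => hk ⟨j, h⟩

lemma detForm_cons_eval {n d : ℕ} (ω : W [⋀^Fin (n + 1)]→ₗ[K] K)
    (fb : Fin d → W) (e' : Fin d → Module.Dual K W)
    (he'dual : ∀ i j, e' j (fb i) = if j = i then (1:K) else 0)
    (s : Fin n → Fin d) (v : W) (hv : ∀ j, e' (s j) v = 0) (t : Fin n → Fin d) :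
    detForm (n+1) (Fin.cons (consContr ω fun i => fb (s i)) fun i => e' (s i))
      (Fin.cons v fun k => fb (t k)) =
    consContr ω (fun i => fb (s i)) v *
      Matrix.det (Matrix.of fun k j : Fin n => if s j = t k then (1:K) else 0) := by
  rw [detForm_apply', Matrix.det_succ_row_zero, Fin.sum_univ_succ]
  rw [Finset.sum_eq_zero fun j _ => by simp [hv j]]
  simp only [Matrix.of_apply, Fin.cons_zero, Fin.val_zero, pow_zero, one_mul, add_zero]
  congr 1
  rw [Fin.succAbove_zero]
  congr 1
  ext k j
  simp [he'dual]

end Aux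

open scoped Classical in
/-- if `W = L ⊕ F` with `L` maximal isotropic decomposable, `F`
`n`-isotropic, `dim (L / ker ω) = ℓ(ω)`, and `fb` is a basis of `F` realizing this
minimum, with dual basis `e'` inside `L^⊥`, then the nonzero `1`-forms
`ê_î = i_{e_{i₁} ∧ ⋯ ∧ e_{iₙ}} ω` are linearly independent (a basis of `(L/ker ω)*`), and
`ω = Σ_î ê_î ∧ e^{i₁} ∧ ⋯ ∧ e^{iₙ}`. -/
theorem stmt12 [FiniteDimensional K W] {n : ℕ} (ω : W [⋀^Fin (n + 1)]→ₗ[K] K)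
    (L F : Submodule K W) (hcompl : IsCompl L F)
    (hmax : MaximalIsotropic ω L) (hdec : DecompSub ω L) (hF : kIsotropic ω n F)
    (hker : kerForm ω ≤ L)
    (hlen : finrank K L = finrank K (kerForm ω) + lengthOf ω)
    (fb : Fin (finrank K F) → W) (hfbF : ∀ i, fb i ∈ F)
    (hfbli : LinearIndependent K fb)
    (hfbspan : Submodule.span K (Set.range fb) = F)
    (e' : Fin (finrank K F) → Module.Dual K W)
    (he'ann : ∀ j, ∀ v ∈ L, e' j v = 0)
    (he'dual : ∀ i j, e' j (fb i) = if j = i then (1 : K) else 0)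
    (hmin : Nat.card {s : Fin n → Fin (finrank K F) //
        StrictMono s ∧ consContr ω (fun i => fb (s i)) ≠ 0} =
      finrank K L - finrank K (kerForm ω)) :
    LinearIndependent K
        (fun s : {s : Fin n → Fin (finrank K F) //
            StrictMono s ∧ consContr ω (fun i => fb (s i)) ≠ 0} =>
          consContr ω (fun i => fb (s.1 i))) ∧
      ω = ∑ s : Fin n → Fin (finrank K F),
        if StrictMono s then
          detForm (n + 1)
            (Fin.cons (consContr ω (fun i => fb (s i))) (fun i => e' (s i)))
        else 0 := by
  classical
  set Ω : W [⋀^Fin (n+1)]→ₗ[K] K := ∑ s : Fin n → Fin (finrank K F),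
    if StrictMono s then
      detForm (n + 1) (Fin.cons (consContr ω (fun i => fb (s i))) (fun i => e' (s i)))
    else 0 with hΩdef
  -- evaluation of Ω on (v, fb∘t) with v ∈ L and t strictly monotone
  have hΩ_cons : ∀ v ∈ L, ∀ t : Fin n → Fin (finrank K F), StrictMono t →
      Ω (Fin.cons v fun k => fb (t k)) = consContr ω (fun i => fb (t i)) v := by
    intro v hv t ht
    rw [hΩdef, alt_sum_apply]
    rw [Finset.sum_eq_single t ?h₀ (by simp)]
    · rw [if_pos ht, detForm_cons_eval ω fb e' he'dual t v (fun j => he'ann _ v hv) t,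
        det_delta ht ht, if_pos rfl, mul_one]
    · intro s _ hst
      split_ifs with hs
      · rw [detForm_cons_eval ω fb e' he'dual s v (fun j => he'ann _ v hv) t,
          det_delta hs ht, if_neg hst, mul_zero]
      · simp
  -- two args in L kill ω
  have hL2 : ∀ w : Fin (n+1) → W, (0 : Fin (n+1)) ≠ 1 → w 0 ∈ L → w 1 ∈ L → ω w = 0 := by
    intro w _ h0 h1
    refine hmax.1 w fun i hi => ?_
    have h01 : i = 0 ∨ i = 1 := by
      rcases n with _ | m
      · exact Or.inl (Subsingleton.elim (α := Fin 1) i 0)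
      · rcases Nat.le_one_iff_eq_zero_or_eq_one.mp hi with h | h
        · exact Or.inl (Fin.ext h)
        · exact Or.inr (Fin.ext h)
    rcases h01 with rfl | rfl
    exacts [h0, h1]
  -- two args in L kill Ω
  have hΩ2 : ∀ w : Fin (n+1) → W, (0 : Fin (n+1)) ≠ 1 → w 0 ∈ L → w 1 ∈ L → Ω w = 0 := by
    intro w h01 h0 h1
    rw [hΩdef, alt_sum_apply]
    refine Finset.sum_eq_zero fun s _ => ?_
    split_ifs with hs
    · rw [detForm_apply']
      refine det_eq_zero_of_two_rows _ 0 1 h01 ?_ ?_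
      · intro c hc
        obtain ⟨c', rfl⟩ := Fin.eq_succ_of_ne_zero hc
        simpa using he'ann (s c') _ h0
      · intro c hc
        obtain ⟨c', rfl⟩ := Fin.eq_succ_of_ne_zero hc
        simpa using he'ann (s c') _ h1
    · simp
  -- all args in F kill Ω
  have hΩF : ∀ w : Fin (n+1) → W, (∀ i, w i ∈ F) → Ω w = 0 := by
    intro w hw
    rw [hΩdef, alt_sum_apply]
    refine Finset.sum_eq_zero fun s _ => ?_
    split_ifs with hs
    · rw [detForm_apply']
      refine Matrix.det_eq_zero_of_column_eq_zero 0 fun i => ?_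
      simp only [Matrix.of_apply, Fin.cons_zero]
      rw [consContr_apply']
      refine hF _ fun k _ => ?_
      refine Fin.cases ?_ (fun k' => ?_) k
      · simpa using hw i
      · simpa using hfbF (s k')
    · simp
  -- the main identity ω = Ω
  have hmain : ω = Ω := by
    obtain ⟨lb⟩ : Nonempty (Basis (Fin (finrank K L)) K L) := ⟨finBasis K L⟩
    set g : Fin (finrank K L) ⊕ Fin (finrank K F) → W :=
      Sum.elim (fun i => ((lb i : L) : W)) fb with hg
    have hspanL :
        Submodule.span K (Set.range fun i : Fin (finrank K L) => ((lb i : L) : W)) = L := by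
      have h1 : (fun i : Fin (finrank K L) => ((lb i : L) : W)) = L.subtype ∘ lb := rfl
      rw [h1, Set.range_comp, ← Submodule.map_span, lb.span_eq, Submodule.map_top,
        Submodule.range_subtype]
    have hli : LinearIndependent K g := by
      refine LinearIndependent.sum_type ?_ hfbli ?_
      · exact lb.linearIndependent.map' L.subtype L.ker_subtype
      · rw [hspanL, hfbspan]; exact hcompl.disjoint
    have hsp : ⊤ ≤ Submodule.span K (Set.range g) := by
      rw [hg, Set.Sum.elim_range, Submodule.span_union, hspanL, hfbspan]
      exact (codisjoint_iff.mp hcompl.codisjoint).ge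
    set b := Basis.mk hli hsp with hb
    have hbinl : ∀ i, b (Sum.inl i) ∈ L := fun i => by rw [hb, Basis.mk_apply]; exact (lb i).2
    have hbinr : ∀ i, b (Sum.inr i) = fb i := fun i => by rw [hb, Basis.mk_apply]; rfl
    refine Basis.ext_alternating b fun u hu => ?_
    by_cases hA : ∃ i j, i ≠ j ∧ (∃ a, u i = Sum.inl a) ∧ (∃ a', u j = Sum.inl a')
    · obtain ⟨i, j, hij, ⟨a, ha⟩, ⟨a', ha'⟩⟩ := hA
      have hwi : b (u i) ∈ L := by rw [ha]; exact hbinl a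
      have hwj : b (u j) ∈ L := by rw [ha']; exact hbinl a'
      rw [alt_zero_of_two_mem ω L hL2 (fun i => b (u i)) i j hij hwi hwj,
        alt_zero_of_two_mem Ω L hΩ2 (fun i => b (u i)) i j hij hwi hwj]
    · by_cases hB : ∃ p a, u p = Sum.inl a
      · obtain ⟨p, a, hp⟩ := hB
        have hnotp : ∀ i, i ≠ p → ∃ c, u i = Sum.inr c := by
          intro i hi
          rcases h : u i with a' | c
          · exact absurd ⟨i, p, hi, ⟨a', h⟩, ⟨a, hp⟩⟩ hA
          · exact ⟨c, rfl⟩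
        have hexc : ∀ k : Fin n, ∃ c, u (Equiv.swap 0 p k.succ) = Sum.inr c := by
          intro k
          refine hnotp _ fun hcon => ?_
          have h2 := congrArg (Equiv.swap 0 p) hcon
          rw [Equiv.swap_apply_self, Equiv.swap_apply_right] at h2
          exact Fin.succ_ne_zero k h2
        choose t ht using hexc
        have htinj : Function.Injective t := by
          intro k k' hkk'
          have h3 : u (Equiv.swap 0 p k.succ) = u (Equiv.swap 0 p k'.succ) := by
            rw [ht k, ht k', hkk']
          exact Fin.succ_injective _ ((Equiv.swap 0 p).injective (hu h3))
        have hwτ : (fun i => b (u i)) ∘ (Equiv.swap 0 p) =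
            Fin.cons (b (u p)) (fun k => fb (t k)) := by
          funext i
          refine Fin.cases ?_ (fun k => ?_) i
          · simp [Equiv.swap_apply_left]
          · show b (u (Equiv.swap 0 p k.succ)) = fb (t k)
            rw [ht k]; exact hbinr (t k)
        have hwp : b (u p) ∈ L := by rw [hp]; exact hbinl a
        rw [ω.map_congr_perm (v := fun i => b (u i)) (Equiv.swap 0 p),
          Ω.map_congr_perm (v := fun i => b (u i)) (Equiv.swap 0 p)]
        congr 1
        rw [hwτ]
        set σ := Tuple.sort t with hσ
        have ht0 : StrictMono (t ∘ σ) :=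
          (Tuple.monotone_sort t).strictMono_of_injective (htinj.comp σ.injective)
        have hteq : (fun k => fb (t k)) = (fun k => fb ((t ∘ σ) k)) ∘ ⇑σ⁻¹ := by
          funext k; simp
        rw [hteq, alt_cons_perm ω, alt_cons_perm Ω]
        congr 1
        rw [hΩ_cons (b (u p)) hwp (t ∘ σ) ht0, consContr_apply']
      · have hall : ∀ i, ∃ c, u i = Sum.inr c := by
          intro i; rcases h : u i with a' | c
          · exact absurd ⟨i, a', h⟩ hB
          · exact ⟨c, rfl⟩
        have hwF : ∀ i, b (u i) ∈ F := by
          intro i; obtain ⟨c, hc⟩ := hall i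
          rw [hc, hbinr]; exact hfbF c
        rw [hF _ (fun i _ => hwF i), hΩF _ hwF]
  refine ⟨?_, hmain⟩
  -- Part 1: linear independence
  set ψ : L →ₗ[K] ({s : Fin n → Fin (finrank K F) //
      StrictMono s ∧ consContr ω (fun i => fb (s i)) ≠ 0} → K) :=
    LinearMap.pi (fun s => (consContr ω fun i => fb (s.1 i)).comp L.subtype) with hψ
  have hψapp : ∀ (x : L) s, ψ x s = consContr ω (fun i => fb (s.1 i)) x.1 := fun x s => rfl
  have hkerψ : LinearMap.ker ψ = (kerForm ω).comap L.subtype := by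
    ext v
    simp only [LinearMap.mem_ker, Submodule.mem_comap]
    constructor
    · intro hv
      show ∀ w : Fin (n+1) → W, (∃ i, w i = (L.subtype v : W)) → ω w = 0
      rintro w ⟨i, hwi⟩
      rw [hmain, hΩdef, alt_sum_apply]
      refine Finset.sum_eq_zero fun s _ => ?_
      split_ifs with hs
      · rw [detForm_apply']
        refine Matrix.det_eq_zero_of_row_eq_zero i fun j => ?_
        simp only [Matrix.of_apply]
        refine Fin.cases ?_ (fun j' => ?_) j
        · rw [Fin.cons_zero, hwi]
          by_cases hz : consContr ω (fun i => fb (s i)) = 0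
          · rw [hz]; rfl
          · have h4 : ψ v ⟨s, hs, hz⟩ = 0 := by rw [hv]; rfl
            exact h4
        · rw [Fin.cons_succ, hwi]
          exact he'ann (s j') _ v.2
      · simp
    · intro hv
      funext s
      rw [hψapp, consContr_apply']
      exact hv _ ⟨0, Fin.cons_zero _ _⟩
  have hfin1 : finrank K (LinearMap.ker ψ) = finrank K (kerForm ω) := by
    rw [hkerψ]
    exact LinearEquiv.finrank_eq (Submodule.comapSubtypeEquivOfLe hker)
  have hrank := LinearMap.finrank_range_add_finrank_ker ψ
  have hcard : Fintype.card {s : Fin n → Fin (finrank K F) //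
      StrictMono s ∧ consContr ω (fun i => fb (s i)) ≠ 0} =
      finrank K L - finrank K (kerForm ω) := by
    rw [← Nat.card_eq_fintype_card]
    exact hmin
  have hle : finrank K (kerForm ω) ≤ finrank K L :=
    Submodule.finrank_mono hker
  have hsurj : Function.Surjective ψ := by
    rw [← LinearMap.range_eq_top]
    apply Submodule.eq_top_of_finrank_eq
    rw [Module.finrank_fintype_fun_eq_card, hcard, ← hfin1]
    exact Nat.eq_sub_of_add_eq hrank
  rw [Fintype.linearIndependent_iff]
  intro cg hg s₀
  obtain ⟨x, hx⟩ := hsurj (Pi.single s₀ 1)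
  have hev := LinearMap.congr_fun hg x.1
  simp only [LinearMap.sum_apply, LinearMap.smul_apply, LinearMap.zero_apply,
    smul_eq_mul] at hev
  have h5 := fun s => (hψapp x s).symm.trans (congrFun hx s)
  simp only [h5] at hev
  simpa [Pi.single_apply, mul_ite, Finset.sum_ite_eq'] using hev
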